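/- Let ω ≠ 0 and let y(t) := (cos(ωt), sin(ωt), 0)ᵀ ∈ S² be a unit direction rotating at constant angular speed ω in a fixed plane. Then the matrix-valued function t ↦ π_{y(t)} = I₃ − y(t) y(t)ᵀ is persistently exciting; in particular the persistent excitation condition holds with window length T = 2π/|ω|. -/

import Mathlib

/-! Over a window of length `2π/|ω|` the direction makes exactly one full turn, so by periodicity
the window integral of `π_{y(τ)}` is `|ω|⁻¹` times its integral over `[0, 2π]`, whatever `t` is.
Over one turn the in-plane entries `1 - cos²` and `1 - sin²` integrate to `π` and the mixed entry
`-sin · cos` to `0`, so the window average is `diag(1/2, 1/2, 1)`, and `μ = min(1/2, π/|ω|)`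
witnesses persistent excitation. -/

open Matrix MeasureTheory Real

noncomputable section

/-- The projection operator `π_y := I₃ − y yᵀ` associated with a vector `y ∈ ℝ³`. -/
def proj (y : Fin 3 → ℝ) : Matrix (Fin 3) (Fin 3) ℝ := 1 - vecMulVec y y

/-- Entrywise interval integral of a matrix-valued function of time. -/
def matInt (M : ℝ → Matrix (Fin 3) (Fin 3) ℝ) (a b : ℝ) : Matrix (Fin 3) (Fin 3) ℝ :=
  Matrix.of fun i j => ∫ τ in a..b, M τ i j

/-- A time-dependent `3×3` matrix `Σ(t)` is persistently exciting (PE) if there exist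
`T > 0` and `0 < μ < T` such that `(1/T) ∫_t^{t+T} Σ(τ) dτ ≥ μ I₃` for all `t > 0`. -/
def IsPE (M : ℝ → Matrix (Fin 3) (Fin 3) ℝ) : Prop :=
  ∃ T μ : ℝ, 0 < T ∧ 0 < μ ∧ μ < T ∧
    ∀ t > (0 : ℝ),
      (T⁻¹ • matInt M t (t + T) - μ • (1 : Matrix (Fin 3) (Fin 3) ℝ)).PosSemidef

theorem Function.Periodic.intervalIntegral_comp_mul_eq {E : Type*} [NormedAddCommGroup E]
    [NormedSpace ℝ E] {f : ℝ → E} {c : ℝ} (hf : Function.Periodic f c) {ω : ℝ} (hω : ω ≠ 0)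
    (t : ℝ) : ∫ τ in t..t + c / |ω|, f (ω * τ) = |ω|⁻¹ • ∫ x in 0..c, f x := by
  rw [intervalIntegral.integral_comp_mul_left f hω, mul_add]
  rcases hω.lt_or_gt with hneg | hpos
  · have hturn : ω * (c / |ω|) = -c := by rw [abs_of_neg hneg]; field_simp
    have hshift := hf.intervalIntegral_add_eq (ω * t - c) 0
    rw [sub_add_cancel, zero_add] at hshift
    rw [hturn, intervalIntegral.integral_symm, ← sub_eq_add_neg, hshift, abs_of_neg hneg,
      inv_neg, smul_neg, neg_smul]
  · have hturn : ω * (c / |ω|) = c := by rw [abs_of_pos hpos]; field_simp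
    rw [hturn, hf.intervalIntegral_add_eq (ω * t) 0, zero_add, abs_of_pos hpos]

theorem posSemidef_diagonal_sub_smul_one {n : Type*} [Fintype n] [DecidableEq n] {d : n → ℝ}
    {μ : ℝ} (hd : ∀ i, μ ≤ d i) : (diagonal d - μ • (1 : Matrix n n ℝ)).PosSemidef := by
  rw [smul_one_eq_diagonal, diagonal_sub, posSemidef_diagonal_iff]
  exact fun i => sub_nonneg.mpr (hd i)

theorem matInt_comp_mul_of_periodic {M : ℝ → Matrix (Fin 3) (Fin 3) ℝ} {c : ℝ}
    (hM : Function.Periodic M c) {ω : ℝ} (hω : ω ≠ 0) (t : ℝ) :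
    matInt (fun τ => M (ω * τ)) t (t + c / |ω|) = |ω|⁻¹ • matInt M 0 c := by
  ext i j
  exact Function.Periodic.intervalIntegral_comp_mul_eq (f := fun x => M x i j)
    (fun x => congrFun (congrFun (hM x) i) j) hω t

def rotatingProj (x : ℝ) : Matrix (Fin 3) (Fin 3) ℝ := proj ![cos x, sin x, 0]

theorem rotatingProj_periodic : Function.Periodic rotatingProj (2 * π) := by
  intro x
  simp only [rotatingProj, cos_add_two_pi, sin_add_two_pi]

theorem matInt_rotatingProj_full_turn :
    matInt rotatingProj 0 (2 * π) = diagonal ![π, π, 2 * π] := by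
  ext i j
  fin_cases i <;> fin_cases j <;>
    simp only [matInt, rotatingProj, proj, vecMulVec, Matrix.sub_apply, one_apply, of_apply,
      diagonal_apply_eq, diagonal_apply_ne, Fin.isValue, Fin.reduceFinMk, Fin.reduceEq, Fin.zero_eta,
      Fin.mk_one, ↓reduceIte, ne_eq, zero_ne_one, one_ne_zero, not_false_eq_true, cons_val_zero,
      cons_val_one, cons_val, Nat.succ_eq_add_one, Nat.reduceAdd, mul_zero, zero_mul, sub_zero,
      sub_self, zero_sub, mul_one, smul_eq_mul, intervalIntegral.integral_zero,
      intervalIntegral.integral_neg, intervalIntegral.integral_const, neg_eq_zero]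
  · rw [intervalIntegral.integral_sub intervalIntegrable_const
      ((by fun_prop : Continuous fun x => cos x * cos x).intervalIntegrable _ _)]
    simp [← sq, integral_cos_sq]
    ring
  · simp [mul_comm (cos _), integral_sin_mul_cos₁]
  · simp [integral_sin_mul_cos₁]
  · rw [intervalIntegral.integral_sub intervalIntegrable_const
      ((by fun_prop : Continuous fun x => sin x * sin x).intervalIntegrable _ _)]
    simp [← sq, integral_sin_sq]
    ring

theorem rotatingProj_window_mean {ω : ℝ} (hω : ω ≠ 0) (t : ℝ) :
    (2 * π / |ω|)⁻¹ • matInt (fun τ => rotatingProj (ω * τ)) t (t + 2 * π / |ω|) =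
      diagonal ![1 / 2, 1 / 2, 1] := by
  rw [matInt_comp_mul_of_periodic rotatingProj_periodic hω, matInt_rotatingProj_full_turn,
    smul_smul, ← diagonal_smul]
  congr 1
  ext i
  fin_cases i <;>
    simp only [Pi.smul_apply, smul_eq_mul, Fin.isValue, Fin.zero_eta, Fin.mk_one, Fin.reduceFinMk,
      cons_val_zero, cons_val_one, cons_val] <;>
    field_simp

/-- For `ω ≠ 0` and the rotating unit direction `y(t) = (cos ωt, sin ωt, 0)ᵀ`, the function
`t ↦ π_{y(t)}` is persistently exciting; in particular the PE condition holds with window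
length `T = 2π/|ω|`. -/
theorem stmt7 (ω : ℝ) (hω : ω ≠ 0) :
    IsPE (fun t => proj ![Real.cos (ω * t), Real.sin (ω * t), 0]) ∧
    ∃ μ : ℝ, 0 < μ ∧ μ < 2 * π / |ω| ∧
      ∀ t > (0 : ℝ),
        ((2 * π / |ω|)⁻¹ •
            matInt (fun τ => proj ![Real.cos (ω * τ), Real.sin (ω * τ), 0]) t (t + 2 * π / |ω|)
          - μ • (1 : Matrix (Fin 3) (Fin 3) ℝ)).PosSemidef := by
  have hω_pos : 0 < |ω| := abs_pos.mpr hω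
  set μ := min (1 / 2) (π / |ω|)
  have hμ_pos : 0 < μ := lt_min (by norm_num) (by positivity)
  have hμ_lt : μ < 2 * π / |ω| :=
    (min_le_right _ _).trans_lt (div_lt_div_of_pos_right (by linarith [pi_pos]) hω_pos)
  have hPE (t : ℝ) : ((2 * π / |ω|)⁻¹ • matInt (fun τ => rotatingProj (ω * τ)) t
      (t + 2 * π / |ω|) - μ • (1 : Matrix (Fin 3) (Fin 3) ℝ)).PosSemidef := by
    rw [rotatingProj_window_mean hω]
    have hμ_half : μ ≤ 1 / 2 := min_le_left _ _
    refine posSemidef_diagonal_sub_smul_one fun i => ?_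
    fin_cases i <;>
      simp only [Fin.isValue, Fin.zero_eta, Fin.mk_one, Fin.reduceFinMk, cons_val_zero,
        cons_val_one, cons_val] <;>
      linarith
  exact ⟨⟨_, μ, by positivity, hμ_pos, hμ_lt, fun t _ => hPE t⟩, μ, hμ_pos, hμ_lt,
    fun t _ => hPE t⟩
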